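/- arXiv:1804.05731 — 7 statements merged into one kernel-verified Lean document; each statement's English description precedes it below -/
import Mathlib

section
/- For all integers d ≥ 2, k ≥ 3, and all positive reals x_1, ..., x_d with x_1 + ... + x_d = 1, the inequality ∑_{1≤i<j≤d} (x_i·x_j^{k-1} + x_j·x_i^{k-1}) ≤ (1/k)·(1 - ∑_{i=1}^d x_i^k) holds. -/
/-!
Write `S n = ∑ i, x i ^ n`. Since `∑ i, x i = 1`, the left-hand side is `∑_{i ≠ j} x i * x j ^ (k-1)
= S (k-1) - S k`. The gaps `S n - S (n+1)` decrease in `n` because `x ^ n * (1 - x) ^ 2 ≥ 0`, which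
makes `k * (S (k-1) - S k) + S k` nonincreasing in `k`. At `k = 3` it is at most `1`, since
`∑_{j ≠ i} x j ^ 2 ≤ (1 - x i) ^ 2` for every `i`.
-/

open Finset

theorem Finset.sum_sum_eq_sum_diag_add_sum_filter_lt {ι M : Type*} [Fintype ι] [LinearOrder ι]
    [AddCommMonoid M] (f : ι → ι → M) :
    ∑ i, ∑ j, f i j = ∑ i, f i i + ∑ p ∈ univ.filter (fun p : ι × ι => p.1 < p.2),
      (f p.1 p.2 + f p.2 p.1) := by
  have hdiag : ∑ i, f i i = ∑ p ∈ univ.filter (fun p : ι × ι => p.1 = p.2), f p.1 p.2 :=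
    sum_nbij' (fun i => (i, i)) Prod.fst (by simp) (by simp +contextual) (by simp)
      (by simp +contextual [Prod.ext_iff]) (by simp)
  have hswap : ∑ p ∈ univ.filter (fun p : ι × ι => p.1 < p.2), f p.2 p.1 =
      ∑ p ∈ univ.filter (fun p : ι × ι => p.2 < p.1), f p.1 p.2 :=
    sum_nbij' Prod.swap Prod.swap (by simp) (by simp) (by simp) (by simp) (by simp)
  have hoff : ∑ p ∈ univ.filter (fun p : ι × ι => ¬p.1 = p.2), f p.1 p.2 =
      ∑ p ∈ univ.filter (fun p : ι × ι => p.1 < p.2), f p.1 p.2 +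
        ∑ p ∈ univ.filter (fun p : ι × ι => p.2 < p.1), f p.1 p.2 := by
    rw [← sum_filter_add_sum_filter_not _ (fun p : ι × ι => p.1 < p.2), filter_filter,
      filter_filter]
    congr 2 <;> ext p <;> simp only [mem_filter, mem_univ, true_and] <;> grind
  rw [sum_add_distrib, hswap, hdiag, ← hoff, sum_filter_add_sum_filter_not,
    Fintype.sum_prod_type']

section PowerSums

variable {ι : Type*} [Fintype ι] {x : ι → ℝ}

theorem sum_filter_lt_mul_pow_add_mul_pow [LinearOrder ι] (hsum : ∑ i, x i = 1) (m : ℕ) :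
    ∑ p ∈ univ.filter (fun p : ι × ι => p.1 < p.2), (x p.1 * x p.2 ^ m + x p.2 * x p.1 ^ m) =
      ∑ i, x i ^ m - ∑ i, x i ^ (m + 1) := by
  have hfull : ∑ i, ∑ j, x i * x j ^ m = ∑ i, x i ^ m := by
    rw [← sum_mul_sum, hsum, one_mul]
  rw [sum_sum_eq_sum_diag_add_sum_filter_lt] at hfull
  simp only [← pow_succ'] at hfull
  linarith

theorem antitone_sum_pow_sub_sum_pow_succ (hx : ∀ i, 0 ≤ x i) :
    Antitone fun n => ∑ i, x i ^ n - ∑ i, x i ^ (n + 1) := by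
  refine antitone_nat_of_succ_le fun n => ?_
  simp only [← sum_sub_distrib]
  refine sum_le_sum fun i _ => ?_
  have h : x i ^ n - x i ^ (n + 1) - (x i ^ (n + 1) - x i ^ (n + 1 + 1)) =
      x i ^ n * (1 - x i) ^ 2 := by ring
  rw [← sub_nonneg, h]
  exact mul_nonneg (pow_nonneg (hx i) n) (sq_nonneg _)

theorem three_mul_sum_sq_sub_sum_cube_le (hx : ∀ i, 0 ≤ x i) (hsum : ∑ i, x i = 1) :
    3 * (∑ i, x i ^ 2 - ∑ i, x i ^ 3) ≤ 1 - ∑ i, x i ^ 3 := by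
  classical
  have hrest : ∀ i, ∑ j, x j ^ 2 - x i ^ 2 ≤ (1 - x i) ^ 2 := fun i => by
    rw [← sum_erase_eq_sub (mem_univ i), ← hsum, ← sum_erase_eq_sub (mem_univ i)]
    exact sum_sq_le_sq_sum_of_nonneg fun j _ => hx j
  have key : ∑ i, x i * (∑ j, x j ^ 2 - x i ^ 2) ≤ ∑ i, x i * (1 - x i) ^ 2 :=
    sum_le_sum fun i _ => mul_le_mul_of_nonneg_left (hrest i) (hx i)
  have hL : ∑ i, x i * (∑ j, x j ^ 2 - x i ^ 2) = ∑ i, x i ^ 2 - ∑ i, x i ^ 3 := by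
    simp only [mul_sub, sum_sub_distrib, ← sum_mul, hsum, one_mul, ← pow_succ']
  have hR : ∑ i, x i * (1 - x i) ^ 2 = 1 - 2 * ∑ i, x i ^ 2 + ∑ i, x i ^ 3 := by
    simp only [show ∀ i, x i * (1 - x i) ^ 2 = x i - 2 * x i ^ 2 + x i ^ 3 from fun i => by ring,
      sum_add_distrib, sum_sub_distrib, hsum, ← mul_sum]
  linarith

theorem succ_mul_sum_pow_sub_sum_pow_succ_le (hx : ∀ i, 0 ≤ x i) (hsum : ∑ i, x i = 1)
    {m : ℕ} (hm : 2 ≤ m) :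
    (m + 1) * (∑ i, x i ^ m - ∑ i, x i ^ (m + 1)) ≤ 1 - ∑ i, x i ^ (m + 1) := by
  induction m, hm using Nat.le_induction with
  | base =>
    convert three_mul_sum_sq_sub_sum_cube_le hx hsum using 2
    norm_num
  | succ m hm ih =>
    have hstep := antitone_sum_pow_sub_sum_pow_succ hx (Nat.le_succ m)
    have hm0 : (0 : ℝ) ≤ m + 1 := by positivity
    push_cast
    linarith [mul_le_mul_of_nonneg_left hstep hm0]

end PowerSums

theorem caterpillar_sum_ineq_general (d k : ℕ) (hk : 3 ≤ k)
    (x : Fin d → ℝ) (hx : ∀ i, 0 < x i) (hsum : ∑ i, x i = 1) :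
    ∑ p ∈ Finset.univ.filter (fun p : Fin d × Fin d => p.1 < p.2),
        (x p.1 * x p.2 ^ (k - 1) + x p.2 * x p.1 ^ (k - 1))
      ≤ (1 / (k : ℝ)) * (1 - ∑ i, x i ^ k) := by
  obtain ⟨m, rfl⟩ : ∃ m, k = m + 1 := ⟨k - 1, by omega⟩
  have hkey := succ_mul_sum_pow_sub_sum_pow_succ_le (fun i => (hx i).le) hsum (by omega : 2 ≤ m)
  rw [Nat.add_sub_cancel, sum_filter_lt_mul_pow_add_mul_pow hsum, one_div_mul_eq_div,
    le_div_iff₀ (by positivity)]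
  push_cast
  linarith

theorem caterpillar_sum_ineq (d k : ℕ) (hd : 2 ≤ d) (hk : 3 ≤ k)
    (x : Fin d → ℝ) (hx : ∀ i, 0 < x i) (hsum : ∑ i, x i = 1) :
    ∑ p ∈ Finset.univ.filter (fun p : Fin d × Fin d => p.1 < p.2),
        (x p.1 * x p.2 ^ (k - 1) + x p.2 * x p.1 ^ (k - 1))
      ≤ (1 / (k : ℝ)) * (1 - ∑ i, x i ^ k) :=
  caterpillar_sum_ineq_general d k hk x hx hsum
end

section
/- For all integers d ≥ 2 and k ≥ 3, the supremum of F_{d,k}(x_1,...,x_d) = (∑_{1≤i<j≤d} (x_i·x_j^{k-1} + x_j·x_i^{k-1})) / (1 - ∑_{i=1}^d x_i^k) over all positive reals x_1,...,x_d with x_1+...+x_d = 1 equals 1/k. -/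
/-!
Write `T_j = ∑ xᵢ ^ j`, so that `T_1 = 1`. The numerator of `F_{d,k}` is
`∑_{i ≠ j} xᵢ xⱼ ^ (k-1) = T_{k-1} - T_k`, and expanding `(∑ xᵢ) ^ k` shows
`T_k + k (T_1 T_{k-1} - T_k) ≤ T_1 ^ k = 1` (for `k ≥ 3` the monomials `xᵢ xⱼ ^ (k-1)` and
`xⱼ xᵢ ^ (k-1)` are distinct), i.e. `F ≤ 1/k`. Along the curve `x = (1 - (d-1)ε, ε, …, ε)` both
numerator and denominator vanish at `ε = 0`, with derivatives `d - 1` and `k (d - 1)`, so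
`F → 1/k` as `ε → 0⁺`.
-/

open Finset Filter Topology

theorem Finset.sum_filter_lt_add_swap {ι M : Type*} [Fintype ι] [LinearOrder ι] [AddCommGroup M]
    (f : ι → ι → M) :
    ∑ p ∈ univ.filter (fun p : ι × ι => p.1 < p.2), (f p.1 p.2 + f p.2 p.1) =
      ∑ i, ∑ j, f i j - ∑ i, f i i := by
  have hsplit : ∀ p : ι × ι, f p.1 p.2 = (if p.1 < p.2 then f p.1 p.2 else 0) +
      (if p.2 < p.1 then f p.1 p.2 else 0) + (if p.1 = p.2 then f p.1 p.2 else 0) := by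
    rintro ⟨i, j⟩
    rcases lt_trichotomy i j with h | rfl | h
    · simp [h, h.not_gt, h.ne]
    · simp
    · simp [h, h.not_gt, h.ne']
  have hswap : ∑ p : ι × ι, (if p.2 < p.1 then f p.1 p.2 else 0) =
      ∑ p : ι × ι, (if p.1 < p.2 then f p.2 p.1 else 0) :=
    Fintype.sum_equiv (Equiv.prodComm ι ι) _ _ (fun _ => rfl)
  rw [eq_sub_iff_add_eq, ← Fintype.sum_prod_type', Fintype.sum_congr _ _ hsplit]
  simp only [sum_add_distrib]
  rw [hswap]
  simp [sum_filter, Fintype.sum_prod_type]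

theorem Finset.sum_filter_lt_mul_pow_add {ι R : Type*} [Fintype ι] [LinearOrder ι] [CommRing R]
    (x : ι → R) (n : ℕ) :
    ∑ p ∈ univ.filter (fun p : ι × ι => p.1 < p.2), (x p.1 * x p.2 ^ n + x p.2 * x p.1 ^ n) =
      (∑ i, x i) * ∑ i, x i ^ n - ∑ i, x i ^ (n + 1) := by
  rw [sum_filter_lt_add_swap (fun i j => x i * x j ^ n), sum_mul_sum]
  simp [pow_succ']

section OrderedRing

variable {ι R : Type*} [CommRing R] [LinearOrder R] [IsStrictOrderedRing R]

theorem pow_add_pow_add_cross_le_add_pow {a b : R} (ha : 0 ≤ a) (hb : 0 ≤ b) {n : ℕ} (hn : 2 ≤ n) :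
    a ^ (n + 1) + b ^ (n + 1) + (n + 1) * (a * b ^ n + b * a ^ n) ≤ (a + b) ^ (n + 1) := by
  induction n, hn using Nat.le_induction with
  | base => exact le_of_eq (by push_cast; ring)
  | succ n hn ih =>
    calc a ^ (n + 1 + 1) + b ^ (n + 1 + 1) + (↑(n + 1) + 1) * (a * b ^ (n + 1) + b * a ^ (n + 1))
        ≤ a ^ (n + 1 + 1) + b ^ (n + 1 + 1) + (↑(n + 1) + 1) * (a * b ^ (n + 1) + b * a ^ (n + 1))
          + (n + 1) * (a ^ 2 * b ^ n + b ^ 2 * a ^ n) := le_add_of_nonneg_right (by positivity)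
      _ = (a + b) * (a ^ (n + 1) + b ^ (n + 1) + (n + 1) * (a * b ^ n + b * a ^ n)) := by
          push_cast; ring
      _ ≤ (a + b) * (a + b) ^ (n + 1) := by gcongr
      _ = (a + b) ^ (n + 1 + 1) := by ring

theorem Finset.sum_pow_le_pow_sum (s : Finset ι) {f : ι → R} (hf : ∀ i ∈ s, 0 ≤ f i) {n : ℕ}
    (hn : n ≠ 0) : ∑ i ∈ s, f i ^ n ≤ (∑ i ∈ s, f i) ^ n := by
  classical
  induction s using Finset.induction_on with
  | empty => simp [zero_pow hn]
  | insert a s ha ih =>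
    obtain ⟨ha0, hs⟩ := (forall_mem_insert a s _).mp hf
    rw [sum_insert ha, sum_insert ha]
    grw [ih hs]
    exact pow_add_pow_le ha0 (sum_nonneg hs) hn

theorem Finset.sum_pow_add_cross_le_pow_sum (s : Finset ι) {f : ι → R}
    (hf : ∀ i ∈ s, 0 ≤ f i) {n : ℕ} (hn : 2 ≤ n) :
    ∑ i ∈ s, f i ^ (n + 1) +
        (n + 1) * ((∑ i ∈ s, f i) * ∑ i ∈ s, f i ^ n - ∑ i ∈ s, f i ^ (n + 1)) ≤
      (∑ i ∈ s, f i) ^ (n + 1) := by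
  classical
  induction s using Finset.induction_on with
  | empty => simp
  | insert a s ha ih =>
    obtain ⟨ha0, hs⟩ := (forall_mem_insert a s _).mp hf
    have hpow := mul_le_mul_of_nonneg_left (s.sum_pow_le_pow_sum hs (by omega : n ≠ 0))
      (by positivity : 0 ≤ (n + 1 : R) * f a)
    have hpair := pow_add_pow_add_cross_le_add_pow ha0 (sum_nonneg hs) hn
    simp only [sum_insert ha]
    linear_combination ih hs + hpow + hpair

end OrderedRing

theorem tendsto_div_of_hasDerivAt_of_eq_zero {f g : ℝ → ℝ} {a b x : ℝ} (hf : HasDerivAt f a x)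
    (hg : HasDerivAt g b x) (hfx : f x = 0) (hgx : g x = 0) (hb : b ≠ 0) :
    Tendsto (fun y => f y / g y) (𝓝[≠] x) (𝓝 (a / b)) := by
  refine (hf.tendsto_slope.div hg.tendsto_slope hb).congr' ?_
  filter_upwards [self_mem_nhdsWithin] with y hy
  rw [Pi.div_apply, slope_def_field, slope_def_field, hfx, hgx, sub_zero, sub_zero,
    div_div_div_cancel_right₀ (sub_ne_zero.mpr hy)]

noncomputable def F {d : ℕ} (k : ℕ) (x : Fin d → ℝ) : ℝ :=
  (∑ p ∈ univ.filter (fun p : Fin d × Fin d => p.1 < p.2),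
      (x p.1 * x p.2 ^ (k - 1) + x p.2 * x p.1 ^ (k - 1))) / (1 - ∑ i, x i ^ k)

theorem F_succ_of_sum_eq_one {d : ℕ} {x : Fin d → ℝ} (hsum : ∑ i, x i = 1) (n : ℕ) :
    F (n + 1) x = (∑ i, x i ^ n - ∑ i, x i ^ (n + 1)) / (1 - ∑ i, x i ^ (n + 1)) := by
  rw [F, Nat.add_sub_cancel, sum_filter_lt_mul_pow_add, hsum, one_mul]

theorem F_le {d n : ℕ} (hn : 2 ≤ n) {x : Fin d → ℝ} (hx : ∀ i, 0 < x i ∧ x i < 1)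
    (hsum : ∑ i, x i = 1) : F (n + 1) x ≤ 1 / (n + 1) := by
  have hpow_lt : ∑ i, x i ^ (n + 1) < ∑ i, x i :=
    sum_lt_sum_of_nonempty (nonempty_of_sum_ne_zero (by rw [hsum]; exact one_ne_zero))
      fun i _ => pow_lt_self_of_lt_one₀ (hx i).1 (hx i).2 (by omega)
  have hcross := univ.sum_pow_add_cross_le_pow_sum (fun i _ => (hx i).1.le) hn
  rw [hsum, one_pow, one_mul] at hcross
  rw [F_succ_of_sum_eq_one hsum, div_le_div_iff₀ (by linarith) (by positivity)]
  linarith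

def spike (m : ℕ) (ε : ℝ) : Fin (m + 1) → ℝ := Fin.cons (1 - m * ε) fun _ => ε

theorem sum_comp_spike (φ : ℝ → ℝ) (m : ℕ) (ε : ℝ) :
    ∑ i, φ (spike m ε i) = φ (1 - m * ε) + m * φ ε := by
  simp [spike, Fin.sum_univ_succ]

theorem sum_spike (m : ℕ) (ε : ℝ) : ∑ i, spike m ε i = 1 :=
  (sum_comp_spike (fun t => t) m ε).trans (by ring)

theorem hasDerivAt_sum_spike_pow (m : ℕ) {k : ℕ} (hk : 2 ≤ k) :
    HasDerivAt (fun ε => ∑ i, spike m ε i ^ k) (-(k * m)) 0 := by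
  simp only [sum_comp_spike (· ^ k)]
  have hbig := (((hasDerivAt_id' (0 : ℝ)).const_mul (m : ℝ)).const_sub 1).fun_pow k
  refine (hbig.fun_add ((hasDerivAt_pow k (0 : ℝ)).const_mul (m : ℝ))).congr_deriv ?_
  simp [zero_pow (show k - 1 ≠ 0 by omega)]

theorem spike_pos_and_lt_one {m : ℕ} (hm : 1 ≤ m) {ε : ℝ} (hε : ε ∈ Set.Ioo 0 (1 / ((m : ℝ) + 1)))
    (i : Fin (m + 1)) :
    0 < spike m ε i ∧ spike m ε i < 1 := by
  have hm' : (1 : ℝ) ≤ m := by exact_mod_cast hm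
  obtain ⟨hε, hε'⟩ := hε
  rw [lt_div_iff₀ (by positivity)] at hε'
  induction i using Fin.cases with
  | zero => simp only [spike, Fin.cons_zero]; constructor <;> nlinarith
  | succ => simp only [spike, Fin.cons_succ]; constructor <;> nlinarith

theorem tendsto_F_spike {m n : ℕ} (hm : 1 ≤ m) (hn : 2 ≤ n) :
    Tendsto (fun ε => F (n + 1) (spike m ε)) (𝓝[>] 0) (𝓝 (1 / (n + 1))) := by
  have hm0 : (0 : ℝ) < m := by exact_mod_cast hm
  have hpow_sum_zero (k : ℕ) (hk : k ≠ 0) : ∑ i, spike m 0 i ^ k = 1 := by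
    simp [sum_comp_spike (· ^ k), hk]
  have hlim := tendsto_div_of_hasDerivAt_of_eq_zero
    ((hasDerivAt_sum_spike_pow m hn).fun_sub (hasDerivAt_sum_spike_pow m (by omega : 2 ≤ n + 1)))
    ((hasDerivAt_sum_spike_pow m (by omega : 2 ≤ n + 1)).const_sub 1)
    (by simp only [hpow_sum_zero n (by omega), hpow_sum_zero (n + 1) (by omega), sub_self])
    (by rw [hpow_sum_zero (n + 1) (by omega), sub_self])
    (by rw [neg_neg]; exact mul_ne_zero (by positivity) hm0.ne')
  have hval : (-(n * m) - -((n + 1 : ℕ) * m)) / -(-((n + 1 : ℕ) * m)) = (1 / (n + 1) : ℝ) := by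
    push_cast
    field_simp
    ring
  rw [hval] at hlim
  exact (hlim.mono_left (nhdsGT_le_nhdsNE 0)).congr fun ε => (F_succ_of_sum_eq_one (sum_spike m ε) n).symm

theorem sup_F_eq_inv_k (d k : ℕ) (hd : 2 ≤ d) (hk : 3 ≤ k) :
    IsLUB {y : ℝ | ∃ x : Fin d → ℝ, (∀ i, 0 < x i ∧ x i < 1) ∧ (∑ i, x i = 1) ∧
      y = (∑ p ∈ Finset.univ.filter (fun p : Fin d × Fin d => p.1 < p.2),
            (x p.1 * x p.2 ^ (k - 1) + x p.2 * x p.1 ^ (k - 1)))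
          / (1 - ∑ i, x i ^ k)} (1 / (k : ℝ)) := by
  obtain ⟨n, rfl⟩ : ∃ n, k = n + 1 := ⟨k - 1, by omega⟩
  obtain ⟨m, rfl⟩ : ∃ m, d = m + 1 := ⟨d - 1, by omega⟩
  have hn : 2 ≤ n := by omega
  have hm : 1 ≤ m := by omega
  push_cast
  refine ⟨?_, fun b hb => ?_⟩
  · rintro _ ⟨x, hx, hsum, rfl⟩
    exact F_le hn hx hsum
  · refine le_of_tendsto (tendsto_F_spike hm hn) ?_
    filter_upwards [Ioo_mem_nhdsGT (show (0 : ℝ) < 1 / (m + 1) by positivity)] with ε hε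
    exact hb ⟨spike m ε, spike_pos_and_lt_one hm hε, sum_spike m ε, rfl⟩
end

section
/- For all integers d ≥ 2, k ≥ 3, and positive reals x_1, ..., x_d with x_1 + ... + x_d = 1, the inequality (∑_{1≤i<j≤d} (x_i·x_j^{k-1} + x_j·x_i^{k-1})) / (1 - ∑_{i=1}^d x_i^k) ≥ (d-1)/(d^{k-1}-1) holds, with equality when x_1 = x_2 = ... = x_d = 1/d. -/
/-!
Put `u m = ∑ i, x i ^ m * (1 - x i)`; on the simplex this is `p m - p (m + 1)` for the power
sums `p m = ∑ i, x i ^ m`. The numerator is `u (k - 1)` and the denominator telescopes to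
`u 1 + ⋯ + u (k - 1)`. By Cauchy–Schwarz the sequence `u` is log-convex, so `u m / u (m + 1)` is
nonincreasing, and `u 1 ≤ d * u 2` is the cubic inequality `p 1 ^ 3 + d * p 3 ≤ (d + 1) * p 1 * p 2`,
which is half of `∑ i, ∑ j, (x i - x j) ^ 2 * (p 1 - x i - x j) ≥ 0`. Hence
`u j ≤ d ^ (k - 1 - j) * u (k - 1)`, and summing the geometric series bounds the denominator by
`(d ^ (k - 1) - 1) / (d - 1) * u (k - 1)`. At the uniform point both sides are computed directly.
-/

open Finset

section Sequences

variable {u : ℕ → ℝ} {c : ℝ}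

theorem le_mul_succ_of_sq_le_mul (hpos : ∀ n, 0 < u n)
    (hlc : ∀ n, u (n + 1) ^ 2 ≤ u n * u (n + 2)) (h0 : u 0 ≤ c * u 1) (n : ℕ) :
    u n ≤ c * u (n + 1) := by
  induction n with
  | zero => exact h0
  | succ n ih =>
    refine le_of_mul_le_mul_left ?_ (hpos (n + 1))
    calc u (n + 1) * u (n + 1) = u (n + 1) ^ 2 := (sq _).symm
      _ ≤ u n * u (n + 2) := hlc n
      _ ≤ c * u (n + 1) * u (n + 2) := mul_le_mul_of_nonneg_right ih (hpos _).le
      _ = u (n + 1) * (c * u (n + 2)) := by ring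

theorem sum_range_le_geom_sum_mul (hc : 0 ≤ c) (hstep : ∀ n, u n ≤ c * u (n + 1)) (n : ℕ) :
    ∑ j ∈ range (n + 1), u j ≤ (∑ i ∈ range (n + 1), c ^ i) * u n := by
  induction n with
  | zero => simp
  | succ n ih =>
    have hgeom : 0 ≤ ∑ i ∈ range (n + 1), c ^ i := sum_nonneg fun i _ => pow_nonneg hc i
    calc ∑ j ∈ range (n + 2), u j = ∑ j ∈ range (n + 1), u j + u (n + 1) := sum_range_succ _ _
      _ ≤ (∑ i ∈ range (n + 1), c ^ i) * (c * u (n + 1)) + u (n + 1) := by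
        gcongr
        exact ih.trans (mul_le_mul_of_nonneg_left (hstep n) hgeom)
      _ = (∑ i ∈ range (n + 2), c ^ i) * u (n + 1) := by rw [geom_sum_succ (n := n + 1)]; ring

theorem sub_one_div_le_div_sum_range (hc : 1 < c) (hpos : ∀ n, 0 < u n)
    (hstep : ∀ n, u n ≤ c * u (n + 1)) (n : ℕ) :
    (c - 1) / (c ^ (n + 1) - 1) ≤ u n / ∑ j ∈ range (n + 1), u j := by
  have hsum : 0 < ∑ j ∈ range (n + 1), u j := sum_pos (fun j _ => hpos j) nonempty_range_add_one
  have hcn : 0 < c ^ (n + 1) - 1 := sub_pos.2 (one_lt_pow₀ hc n.succ_ne_zero)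
  rw [div_le_div_iff₀ hcn hsum, ← geom_sum_mul]
  calc (c - 1) * ∑ j ∈ range (n + 1), u j ≤ (c - 1) * ((∑ i ∈ range (n + 1), c ^ i) * u n) :=
        mul_le_mul_of_nonneg_left (sum_range_le_geom_sum_mul (by linarith) hstep n) (by linarith)
    _ = u n * ((∑ i ∈ range (n + 1), c ^ i) * (c - 1)) := by ring

end Sequences

theorem sum_filter_fst_lt_add_sum_diag {ι M : Type*} [Fintype ι] [LinearOrder ι] [AddCommMonoid M]
    (f : ι → ι → M) :
    ∑ p ∈ univ.filter (fun p : ι × ι => p.1 < p.2), (f p.1 p.2 + f p.2 p.1) + ∑ i, f i i =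
      ∑ i, ∑ j, f i j := by
  have hswap : ∑ p : ι × ι, (if p.1 < p.2 then f p.2 p.1 else 0) =
      ∑ p : ι × ι, (if p.2 < p.1 then f p.1 p.2 else 0) :=
    Fintype.sum_equiv (Equiv.prodComm ι ι) _ _ fun _ => rfl
  have hdiag : ∑ i, f i i = ∑ p : ι × ι, (if p.1 = p.2 then f p.1 p.2 else 0) := by
    simp [Fintype.sum_prod_type]
  rw [sum_add_distrib, sum_filter, sum_filter, hswap, hdiag, ← Fintype.sum_prod_type',
    ← sum_add_distrib, ← sum_add_distrib]
  refine Fintype.sum_congr _ _ fun p => ?_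
  rcases lt_trichotomy p.1 p.2 with h | h | h
  · simp [h, h.not_gt, h.ne]
  · simp [h]
  · simp [h, h.not_gt, h.ne']

section PowerSums

variable {ι : Type*} [Fintype ι] (x : ι → ℝ)

theorem sum_sum_sq_sub_mul_sum_sub_sub :
    ∑ i, ∑ j, (x i - x j) ^ 2 * (∑ l, x l - x i - x j) =
      2 * ((Fintype.card ι + 1) * (∑ i, x i) * ∑ i, x i ^ 2 - (∑ i, x i) ^ 3
        - Fintype.card ι * ∑ i, x i ^ 3) := by
  set S := ∑ l, x l
  have h : ∀ i j, (x i - x j) ^ 2 * (S - x i - x j) =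
      S * x i ^ 2 - 2 * S * x i * x j + S * x j ^ 2 - x i ^ 3 + x i ^ 2 * x j
        + x i * x j ^ 2 - x j ^ 3 := fun i j => by ring
  simp only [h, sum_add_distrib, sum_sub_distrib, ← mul_sum, ← sum_mul, sum_const, card_univ,
    nsmul_eq_mul]
  ring

theorem pow_three_sum_add_card_mul_le (hx : ∀ i, 0 ≤ x i) :
    (∑ i, x i) ^ 3 + Fintype.card ι * ∑ i, x i ^ 3 ≤
      (Fintype.card ι + 1) * (∑ i, x i) * ∑ i, x i ^ 2 := by
  classical
  have : 0 ≤ ∑ i, ∑ j, (x i - x j) ^ 2 * (∑ l, x l - x i - x j) := by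
    refine sum_nonneg fun i _ => sum_nonneg fun j _ => ?_
    rcases eq_or_ne i j with rfl | hij
    · simp
    · have : x i + x j ≤ ∑ l, x l := by
        rw [← sum_pair hij]
        exact sum_le_sum_of_subset_of_nonneg (subset_univ _) fun l _ _ => hx l
      exact mul_nonneg (sq_nonneg _) (by linarith)
  rw [sum_sum_sq_sub_mul_sum_sub_sub] at this
  linarith

def powGap (m : ℕ) : ℝ := ∑ i, x i ^ m * (1 - x i)

theorem powGap_eq_sub (m : ℕ) : powGap x m = ∑ i, x i ^ m - ∑ i, x i ^ (m + 1) := by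
  simp only [powGap, mul_one_sub, pow_succ, sum_sub_distrib]

section Simplex

variable (hsum : ∑ i, x i = 1)
include hsum

theorem sum_range_powGap (n : ℕ) : ∑ j ∈ range n, powGap x (j + 1) = 1 - ∑ i, x i ^ (n + 1) := by
  simp only [powGap_eq_sub]
  rw [sum_range_sub' (fun j => ∑ i, x i ^ (j + 1))]
  simp only [zero_add, pow_one, hsum]

theorem powGap_one_le_card_mul (hx : ∀ i, 0 ≤ x i) : powGap x 1 ≤ Fintype.card ι * powGap x 2 := by
  have := pow_three_sum_add_card_mul_le x hx
  rw [hsum] at this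
  simp only [powGap_eq_sub, pow_one, hsum]
  linarith

theorem lt_one_of_sum_eq_one (hx : ∀ i, 0 < x i) (hcard : 1 < Fintype.card ι) (i : ι) :
    x i < 1 := by
  obtain ⟨j, -, hji⟩ := exists_mem_ne (by rwa [card_univ]) i
  calc x i < ∑ l, x l := single_lt_sum hji (mem_univ i) (mem_univ j) (hx j) fun l _ _ => (hx l).le
    _ = 1 := hsum

theorem sum_filter_lt_eq_powGap [LinearOrder ι] (m : ℕ) :
    ∑ p ∈ univ.filter (fun p : ι × ι => p.1 < p.2), (x p.1 * x p.2 ^ m + x p.2 * x p.1 ^ m) =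
      powGap x m := by
  have := sum_filter_fst_lt_add_sum_diag fun i j => x i * x j ^ m
  simp only [← mul_sum, ← sum_mul, hsum, one_mul, ← pow_succ'] at this
  rw [powGap_eq_sub]
  linarith

end Simplex

theorem powGap_pos [Nonempty ι] (h0 : ∀ i, 0 < x i) (h1 : ∀ i, x i < 1) (m : ℕ) :
    0 < powGap x m :=
  sum_pos (fun i _ => mul_pos (pow_pos (h0 i) m) (sub_pos.2 (h1 i))) univ_nonempty

theorem powGap_succ_sq_le (h0 : ∀ i, 0 ≤ x i) (h1 : ∀ i, x i ≤ 1) (m : ℕ) :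
    powGap x (m + 1) ^ 2 ≤ powGap x m * powGap x (m + 2) :=
  sum_sq_le_sum_mul_sum_of_sq_le_mul _
    (fun i _ => mul_nonneg (pow_nonneg (h0 i) _) (sub_nonneg.2 (h1 i)))
    (fun i _ => mul_nonneg (pow_nonneg (h0 i) _) (sub_nonneg.2 (h1 i)))
    fun i _ => (by ring : _ = _).le

end PowerSums

theorem F_ge_min_and_eq (d k : ℕ) (hd : 2 ≤ d) (hk : 3 ≤ k)
    (x : Fin d → ℝ) (hx : ∀ i, 0 < x i) (hsum : ∑ i, x i = 1) :
    (∑ p ∈ Finset.univ.filter (fun p : Fin d × Fin d => p.1 < p.2),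
        (x p.1 * x p.2 ^ (k - 1) + x p.2 * x p.1 ^ (k - 1)))
      / (1 - ∑ i, x i ^ k) ≥ ((d : ℝ) - 1) / ((d : ℝ) ^ (k - 1) - 1)
    ∧ ((∀ i, x i = 1 / (d : ℝ)) →
      (∑ p ∈ Finset.univ.filter (fun p : Fin d × Fin d => p.1 < p.2),
          (x p.1 * x p.2 ^ (k - 1) + x p.2 * x p.1 ^ (k - 1)))
        / (1 - ∑ i, x i ^ k) = ((d : ℝ) - 1) / ((d : ℝ) ^ (k - 1) - 1)) := by
  obtain ⟨K, rfl⟩ : ∃ K, k = K + 2 := ⟨k - 2, by omega⟩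
  rw [show K + 2 - 1 = K + 1 by omega, sum_filter_lt_eq_powGap x hsum]
  have : NeZero d := ⟨by omega⟩
  have hd1 : (1 : ℝ) < d := by exact_mod_cast hd
  have hlt : ∀ i, x i < 1 := lt_one_of_sum_eq_one x hsum hx (by rw [Fintype.card_fin]; omega)
  have hpos : ∀ n, 0 < powGap x (n + 1) := fun n => powGap_pos x hx hlt _
  have hstep : ∀ n, powGap x (n + 1) ≤ d * powGap x (n + 1 + 1) :=
    le_mul_succ_of_sq_le_mul hpos
      (fun n => powGap_succ_sq_le x (fun i => (hx i).le) (fun i => (hlt i).le) (n + 1))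
      (by simpa using powGap_one_le_card_mul x hsum fun i => (hx i).le)
  have hden : 0 < 1 - ∑ i, x i ^ (K + 2) := by
    rw [← sum_range_powGap x hsum]
    exact sum_pos (fun j _ => hpos j) nonempty_range_add_one
  refine ⟨?_, fun hconst => ?_⟩
  · rw [ge_iff_le, ← sum_range_powGap x hsum]
    exact sub_one_div_le_div_sum_range hd1 hpos hstep K
  · rw [div_eq_div_iff hden.ne' (sub_pos.2 (one_lt_pow₀ hd1 K.succ_ne_zero)).ne']
    simp only [powGap, hconst, sum_const, card_univ, Fintype.card_fin, nsmul_eq_mul, one_div_pow]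
    field_simp
    ring
end

section
/- Muirhead's inequality: if (a_1,...,a_n) majorises (b_1,...,b_n) (both weakly decreasing real sequences with equal sums and partial-sum domination), then for any positive reals x_1,...,x_n, ∑_{π ∈ S_n} ∏_{i=1}^n x_{π(i)}^{a_i} ≥ ∑_{π ∈ S_n} ∏_{i=1}^n x_{π(i)}^{b_i}. -/
/-!
Moving an amount `0 ≤ t ≤ c j - c k` of exponent from `c j` to `c k` can only decrease the
symmetric sum: pairing `π` with `π * swap j k`, each pair of terms drops by a nonnegative
multiple of
`u ^ p * v ^ q + u ^ q * v ^ p - u ^ p' * v ^ q' - u ^ q' * v ^ p'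
  = (u * v) ^ q * (u ^ (p' - q) - v ^ (p' - q)) * (u ^ (q' - q) - v ^ (q' - q)) ≥ 0`,
where `u = x (π j)`, `v = x (π k)`, `p = c j`, `q = c k`, `p' = p - t` and `q' = q + t`.
If `a` majorizes `b ≠ a`, let `k` be the first index with `a k < b k` and `j < k` the last
index with `a j ≠ b j`, so that `b j < a j`. Moving `min (a j - b j) (b k - a k)` from `j` to `k`
is such a move (because `b` is decreasing), keeps `a` majorizing `b`, and makes `a` agree with
`b` at one more index; induct on the number of indices where `a` and `b` differ.
-/

open Finset

theorem rpow_mul_rpow_add_rpow_mul_rpow_le {u v p q p' q' : ℝ} (hu : 0 < u) (hv : 0 < v)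
    (hp' : q ≤ p') (hq' : q ≤ q') (h : p + q = p' + q') :
    u ^ p' * v ^ q' + u ^ q' * v ^ p' ≤ u ^ p * v ^ q + u ^ q * v ^ p := by
  obtain ⟨s, hs, rfl⟩ : ∃ s, 0 ≤ s ∧ p' = q + s := ⟨p' - q, by linarith, by ring⟩
  obtain ⟨t, ht, rfl⟩ : ∃ t, 0 ≤ t ∧ q' = q + t := ⟨q' - q, by linarith, by ring⟩
  obtain rfl : p = q + s + t := by linarith
  have hsame_sign : 0 ≤ (u ^ s - v ^ s) * (u ^ t - v ^ t) := by
    rcases le_total u v with huv | hvu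
    · exact mul_nonneg_of_nonpos_of_nonpos (sub_nonpos.2 (Real.rpow_le_rpow hu.le huv hs))
        (sub_nonpos.2 (Real.rpow_le_rpow hu.le huv ht))
    · exact mul_nonneg (sub_nonneg.2 (Real.rpow_le_rpow hv.le hvu hs))
        (sub_nonneg.2 (Real.rpow_le_rpow hv.le hvu ht))
  have hqq : 0 ≤ u ^ q * v ^ q := by positivity
  simp only [Real.rpow_add hu, Real.rpow_add hv]
  linear_combination mul_nonneg hqq hsame_sign

noncomputable def symmetricSum {ι : Type*} [Fintype ι] [DecidableEq ι] (x c : ι → ℝ) : ℝ :=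
  ∑ π : Equiv.Perm ι, ∏ i, x (π i) ^ c i

def transfer {ι : Type*} [DecidableEq ι] (c : ι → ℝ) (j k : ι) (t : ℝ) : ι → ℝ :=
  c - Pi.single j t + Pi.single k t

section Transfer

variable {ι : Type*} [DecidableEq ι] {c : ι → ℝ} {j k : ι} {t : ℝ}

theorem transfer_apply_left (hjk : j ≠ k) : transfer c j k t j = c j - t := by
  simp [transfer, hjk]

theorem transfer_apply_right (hjk : j ≠ k) : transfer c j k t k = c k + t := by
  simp [transfer, hjk.symm]

theorem transfer_apply_of_ne {i : ι} (hij : i ≠ j) (hik : i ≠ k) : transfer c j k t i = c i := by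
  simp [transfer, hij, hik]

theorem sum_transfer (s : Finset ι) :
    ∑ i ∈ s, transfer c j k t i
      = ∑ i ∈ s, c i - (if j ∈ s then t else 0) + (if k ∈ s then t else 0) := by
  simp only [transfer, Pi.add_apply, Pi.sub_apply, sum_add_distrib, sum_sub_distrib, sum_pi_single']

variable [Fintype ι] {x : ι → ℝ}

theorem prod_eq_mul_mul_prod_compl_pair {M : Type*} [CommMonoid M] (hjk : j ≠ k) (f : ι → M) :
    ∏ i, f i = f j * f k * ∏ i ∈ {j, k}ᶜ, f i := by
  rw [← prod_mul_prod_compl {j, k}, prod_pair hjk]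

theorem card_ne_transfer_lt {b : ι → ℝ} (hjk : j ≠ k) (hj : c j ≠ b j) (hk : c k ≠ b k)
    (hhit : c j - t = b j ∨ c k + t = b k) :
    #{i | transfer c j k t i ≠ b i} < #{i | c i ≠ b i} := by
  refine card_lt_card (ssubset_iff_of_subset (fun i => ?_) |>.2 ?_)
  · simp only [mem_filter, mem_univ, true_and]
    intro hi
    by_cases hij : i = j
    · exact hij ▸ hj
    by_cases hik : i = k
    · exact hik ▸ hk
    rwa [transfer_apply_of_ne hij hik] at hi
  · simp only [mem_filter, mem_univ, true_and, not_not]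
    rcases hhit with hhit | hhit
    · exact ⟨j, hj, by rw [transfer_apply_left hjk, hhit]⟩
    · exact ⟨k, hk, by rw [transfer_apply_right hjk, hhit]⟩

theorem symmetricSum_transfer_le (hx : ∀ i, 0 < x i) (hjk : j ≠ k) (ht₀ : 0 ≤ t)
    (ht : t ≤ c j - c k) : symmetricSum x (transfer c j k t) ≤ symmetricSum x c := by
  let term (e : ι → ℝ) (π : Equiv.Perm ι) : ℝ := ∏ i, x (π i) ^ e i
  -- pair each permutation `π` with `π * swap j k`: only the exponents at `j` and `k` differ
  have hpair : ∀ π, term (transfer c j k t) π + term (transfer c j k t) (π * Equiv.swap j k)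
      ≤ term c π + term c (π * Equiv.swap j k) := by
    intro π
    have hswap : ∀ c' : ι → ℝ, ∏ i ∈ {j, k}ᶜ, x (π (Equiv.swap j k i)) ^ c' i
        = ∏ i ∈ {j, k}ᶜ, x (π i) ^ c' i := fun c' => prod_congr rfl fun i hi => by
      simp only [mem_compl, mem_insert, mem_singleton, not_or] at hi
      rw [Equiv.swap_apply_of_ne_of_ne hi.1 hi.2]
    have htail :
        ∏ i ∈ {j, k}ᶜ, x (π i) ^ transfer c j k t i = ∏ i ∈ {j, k}ᶜ, x (π i) ^ c i :=
      prod_congr rfl fun i hi => by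
        simp only [mem_compl, mem_insert, mem_singleton, not_or] at hi
        rw [transfer_apply_of_ne hi.1 hi.2]
    have hC : 0 ≤ ∏ i ∈ {j, k}ᶜ, x (π i) ^ c i :=
      prod_nonneg fun i _ => (Real.rpow_pos_of_pos (hx _) _).le
    have key := rpow_mul_rpow_add_rpow_mul_rpow_le (hx (π j)) (hx (π k))
      (p := c j) (q := c k) (p' := c j - t) (q' := c k + t) (by linarith) (by linarith) (by ring)
    simp only [term, Equiv.Perm.mul_apply, prod_eq_mul_mul_prod_compl_pair hjk, hswap, htail,
      Equiv.swap_apply_left, Equiv.swap_apply_right, transfer_apply_left hjk,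
      transfer_apply_right hjk]
    linear_combination mul_le_mul_of_nonneg_right key hC
  have hswap_sum : ∀ c', ∑ π, term c' (π * Equiv.swap j k) = symmetricSum x c' := fun c' =>
    Equiv.sum_comp (Equiv.mulRight (Equiv.swap j k)) (term c')
  have := sum_le_sum fun π (_ : π ∈ univ) => hpair π
  rw [sum_add_distrib, sum_add_distrib, hswap_sum, hswap_sum] at this
  unfold symmetricSum at *
  linarith

end Transfer

section Majorization

variable {n : ℕ}

def prefixSum (f : Fin n → ℝ) (m : ℕ) : ℝ :=
  ∑ i ∈ univ.filter (fun i : Fin n => (i : ℕ) < m), f i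

/-- Prefix sums are taken in the given order of the indices: neither sequence is sorted. -/
def Majorizes (a b : Fin n → ℝ) : Prop :=
  (∀ m, prefixSum b m ≤ prefixSum a m) ∧ ∑ i, a i = ∑ i, b i

theorem prefixSum_succ (f : Fin n → ℝ) (i : Fin n) :
    prefixSum f (i + 1) = prefixSum f i + f i := by
  have : univ.filter (fun l : Fin n => (l : ℕ) < i + 1)
      = insert i (univ.filter (fun l : Fin n => (l : ℕ) < i)) := by
    ext l
    simp only [mem_filter, mem_univ, true_and, mem_insert, Fin.ext_iff]
    omega
  rw [prefixSum, this, sum_insert (by simp), add_comm, prefixSum]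

theorem prefixSum_of_le (f : Fin n → ℝ) {m : ℕ} (hm : n ≤ m) : prefixSum f m = ∑ i, f i := by
  rw [prefixSum, filter_true_of_mem fun i _ => i.isLt.trans_le hm]

theorem prefixSum_congr {f g : Fin n → ℝ} {m : ℕ} (h : ∀ i : Fin n, (i : ℕ) < m → f i = g i) :
    prefixSum f m = prefixSum g m :=
  sum_congr rfl fun i hi => h i (mem_filter.1 hi).2

theorem prefixSum_transfer (a : Fin n → ℝ) (j k : Fin n) (t : ℝ) (m : ℕ) :
    prefixSum (transfer a j k t) m
      = prefixSum a m - (if (j : ℕ) < m then t else 0) + (if (k : ℕ) < m then t else 0) := by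
  simp only [prefixSum, sum_transfer, mem_filter, mem_univ, true_and]

variable {a b : Fin n → ℝ} {j k : Fin n} {t : ℝ}

theorem exists_transfer_pair (h : Majorizes a b) (hne : a ≠ b) :
    ∃ j k, j < k ∧ b j < a j ∧ a k < b k ∧ ∀ i, j < i → i < k → a i = b i := by
  have hdeficit : (univ.filter fun i => a i < b i).Nonempty := by
    rw [filter_nonempty_iff]
    by_contra! hge
    exact hne (funext fun i =>
      ((sum_eq_sum_iff_of_le fun i _ => hge i (mem_univ i)).1 h.2.symm i (mem_univ i)).symm)
  obtain ⟨k, hk, hkmin⟩ := exists_min_image _ id hdeficit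
  simp only [mem_filter, mem_univ, true_and, id] at hk hkmin
  have hsurplus : (univ.filter fun i => i < k ∧ a i ≠ b i).Nonempty := by
    rw [filter_nonempty_iff]
    by_contra! heq
    have := h.1 (k + 1)
    rw [prefixSum_succ, prefixSum_succ, prefixSum_congr fun i hi => heq i (mem_univ i) hi] at this
    linarith
  obtain ⟨j, hj, hjmax⟩ := exists_max_image _ id hsurplus
  simp only [mem_filter, mem_univ, true_and, id] at hj hjmax
  have hbj : b j ≤ a j := not_lt.1 fun hlt => (hkmin j hlt).not_gt hj.1
  refine ⟨j, k, hj.1, lt_of_le_of_ne hbj hj.2.symm, hk, fun i hji hik => ?_⟩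
  by_contra hi
  exact (hjmax i ⟨hik, hi⟩).not_gt hji

theorem prefixSum_sub_prefixSum_of_eqOn (hgap : ∀ i, j < i → i < k → a i = b i) {m : ℕ}
    (hjm : (j : ℕ) < m) (hmk : m ≤ k) :
    prefixSum a m - prefixSum b m = prefixSum a j - prefixSum b j + (a j - b j) := by
  induction m, hjm using Nat.le_induction with
  | base => rw [prefixSum_succ, prefixSum_succ]; ring
  | succ m hjm ih =>
    have hm : m < n := by omega
    have := hgap ⟨m, hm⟩ hjm (by simp only [Fin.lt_def]; omega)
    rw [prefixSum_succ a ⟨m, hm⟩, prefixSum_succ b ⟨m, hm⟩, this]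
    linarith [ih (by omega)]

theorem majorizes_transfer (h : Majorizes a b) (hjk : j < k)
    (ht : ∀ m, (j : ℕ) < m → m ≤ k → t ≤ prefixSum a m - prefixSum b m) :
    Majorizes (transfer a j k t) b := by
  refine ⟨fun m => ?_, by simp [sum_transfer, h.2]⟩
  have hjk' : (j : ℕ) < k := hjk
  rw [prefixSum_transfer]
  split_ifs with hj hk hk
  · linarith [h.1 m]
  · linarith [ht m hj (not_lt.1 hk)]
  · omega
  · linarith [h.1 m]

theorem exists_transfer_of_ne (hb : Antitone b) (h : Majorizes a b) (hne : a ≠ b) :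
    ∃ j k t, j ≠ k ∧ 0 ≤ t ∧ t ≤ a j - a k ∧ Majorizes (transfer a j k t) b ∧
      #{i | transfer a j k t i ≠ b i} < #{i | a i ≠ b i} := by
  obtain ⟨j, k, hjk, hj, hk, hgap⟩ := exists_transfer_pair h hne
  -- the largest transfer that keeps `a j ≥ b j` and `a k ≤ b k`
  set t := min (a j - b j) (b k - a k)
  have htj : t ≤ a j - b j := min_le_left _ _
  have htk : t ≤ b k - a k := min_le_right _ _
  refine ⟨j, k, t, hjk.ne, le_min (by linarith) (by linarith), by linarith [hb hjk.le], ?_,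
    card_ne_transfer_lt hjk.ne hj.ne' hk.ne ?_⟩
  · refine majorizes_transfer h hjk fun m hjm hmk => ?_
    rw [prefixSum_sub_prefixSum_of_eqOn hgap hjm hmk]
    linarith [h.1 j]
  · rcases min_choice (a j - b j) (b k - a k) with ht | ht
    · exact .inl (by linarith)
    · exact .inr (by linarith)

theorem symmetricSum_le_of_majorizes {x : Fin n → ℝ} (hx : ∀ i, 0 < x i) (hb : Antitone b)
    (h : Majorizes a b) : symmetricSum x b ≤ symmetricSum x a := by
  induction hN : #{i | a i ≠ b i} using Nat.strong_induction_on generalizing a with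
  | _ N ih =>
    obtain rfl | hne := eq_or_ne a b
    · exact le_rfl
    obtain ⟨j, k, t, hjk, ht₀, ht, h', hlt⟩ := exists_transfer_of_ne hb h hne
    exact (ih _ (hN ▸ hlt) h' rfl).trans (symmetricSum_transfer_le hx hjk ht₀ ht)

end Majorization

theorem muirhead_general (n : ℕ) (a b : Fin n → ℝ)
    (hb_mono : ∀ i j : Fin n, i ≤ j → b j ≤ b i)
    (hsum : ∑ i, a i = ∑ i, b i)
    (hmaj : ∀ m : ℕ, m < n →
      ∑ i ∈ Finset.univ.filter (fun i : Fin n => (i : ℕ) < m), b i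
        ≤ ∑ i ∈ Finset.univ.filter (fun i : Fin n => (i : ℕ) < m), a i)
    (x : Fin n → ℝ) (hx : ∀ i, 0 < x i) :
    ∑ π : Equiv.Perm (Fin n), ∏ i, Real.rpow (x (π i)) (b i)
      ≤ ∑ π : Equiv.Perm (Fin n), ∏ i, Real.rpow (x (π i)) (a i) := by
  have hab : Majorizes a b := by
    refine ⟨fun m => ?_, hsum⟩
    rcases lt_or_ge m n with hm | hm
    · exact hmaj m hm
    · rw [prefixSum_of_le a hm, prefixSum_of_le b hm, hsum]
  exact symmetricSum_le_of_majorizes hx (fun i j hij => hb_mono i j hij) hab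

theorem muirhead (n : ℕ) (hn : 0 < n) (a b : Fin n → ℝ)
    (ha_mono : ∀ i j : Fin n, i ≤ j → a j ≤ a i)
    (hb_mono : ∀ i j : Fin n, i ≤ j → b j ≤ b i)
    (ha_nonneg : ∀ i, 0 ≤ a i) (hb_nonneg : ∀ i, 0 ≤ b i)
    (hsum : ∑ i, a i = ∑ i, b i)
    (hmaj : ∀ m : ℕ, m < n →
      ∑ i ∈ Finset.univ.filter (fun i : Fin n => (i : ℕ) < m), b i
        ≤ ∑ i ∈ Finset.univ.filter (fun i : Fin n => (i : ℕ) < m), a i)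
    (x : Fin n → ℝ) (hx : ∀ i, 0 < x i) :
    ∑ π : Equiv.Perm (Fin n), ∏ i, Real.rpow (x (π i)) (b i)
      ≤ ∑ π : Equiv.Perm (Fin n), ∏ i, Real.rpow (x (π i)) (a i) :=
  muirhead_general n a b hb_mono hsum hmaj x hx
end

section
/- Fix integers d ≥ 2 and r with 2 ≤ r ≤ d, and let k ≥ 2 with r-1 dividing k-1. The count c(F^r_k, CD^d_h) of copies of the k-leaf r-ary caterpillar in the complete d-ary tree of height h satisfies the recursion c(F^r_k, CD^d_h) = d·c(F^r_k, CD^d_{h-1}) + r·C(d,r)·d^{(h-1)(r-1)}·c(F^r_{k-r+1}, CD^d_{h-1}) for k > r and h > 1, with c(F^r_r, CD^d_h) = C(d,r)·(d^{rh} - d^h)/(d^r - d); then c(F^r_k, CD^d_h) = C(d,r)^{(k-1)/(r-1)}·(r/d)^{(k-r)/(r-1)}·d^{h-1}·∏_{i=1}^{(k-1)/(r-1)} (d^{h(r-1)} - d^{(i-1)(r-1)})/(d^{i(r-1)} - 1). -/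
/-!
Put `q = r - 1`, `y = d ^ q` and `k = q m + 1`. The product
`G(m, h) = ∏_{i < m} (y ^ h - y ^ i) / (y ^ (i + 1) - 1)` satisfies the Pascal-type rule
`G(m + 1, h + 1) = G(m + 1, h) + y ^ h G(m, h)`, with `G(0, h) = 1` and `G(m, h) = 0` for `h < m`.
Multiplied by `C(d, r) ^ m (r / d) ^ (m - 1) d ^ (h - 1)` this turns exactly into the caterpillar
recursion, so the closed form follows by induction on the height.
-/

open Finset

section GaussianProd

variable {K : Type*} [Field K]

/-- `y ^ (m (m - 1) / 2)` times the Gaussian binomial coefficient `[h choose m]_y`. -/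
def gaussianProd (y : K) (m h : ℕ) : K :=
  ∏ i ∈ range m, (y ^ h - y ^ i) / (y ^ (i + 1) - 1)

lemma gaussianProd_one_left (y : K) (h : ℕ) :
    gaussianProd y 1 h = (y ^ h - 1) / (y - 1) := by
  simp [gaussianProd]

lemma gaussianProd_eq_zero_of_lt (y : K) {m h : ℕ} (hlt : h < m) : gaussianProd y m h = 0 :=
  prod_eq_zero (mem_range.2 hlt) (by simp)

lemma gaussianProd_succ_succ (y : K) (m h : ℕ) (hy : y ^ (m + 1) ≠ 1) :
    gaussianProd y (m + 1) (h + 1) = gaussianProd y (m + 1) h + y ^ h * gaussianProd y m h := by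
  have hden : y ^ (m + 1) - 1 ≠ 0 := sub_ne_zero.2 hy
  have hnum : ∏ i ∈ range (m + 1), (y ^ (h + 1) - y ^ i)
      = (y ^ (h + 1) - 1) * y ^ m * ∏ i ∈ range m, (y ^ h - y ^ i) := by
    have hshift : ∀ i, y ^ (h + 1) - y ^ (i + 1) = y * (y ^ h - y ^ i) := fun i ↦ by ring
    simp only [prod_range_succ', hshift, prod_mul_distrib, prod_const, card_range, pow_zero]
    ring
  simp only [gaussianProd, prod_div_distrib]
  rw [hnum, prod_range_succ, prod_range_succ _ m]
  field_simp
  ring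

lemma prod_Icc_pow_mul_eq_gaussianProd (x : K) (q m h : ℕ) :
    ∏ i ∈ Icc 1 m, (x ^ (h * q) - x ^ ((i - 1) * q)) / (x ^ (i * q) - 1)
      = gaussianProd (x ^ q) m h := by
  rw [gaussianProd, ← Ico_add_one_right_eq_Icc, prod_Ico_eq_prod_range]
  simp only [Nat.add_sub_cancel, add_comm 1, ← pow_mul, mul_comm q]

theorem eq_mul_gaussianProd_of_recurrence {a : ℕ → ℕ → K} {d r C y : K} (hd : d ≠ 0)
    (hy : ∀ i, y ^ (i + 1) ≠ 1)
    (base : ∀ h, a 1 (h + 1) = C * d ^ h * ((y ^ (h + 1) - 1) / (y - 1)))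
    (height_one : ∀ m, a (m + 2) 1 = 0)
    (step : ∀ m h,
      a (m + 2) (h + 2) = d * a (m + 2) (h + 1) + r * C * y ^ (h + 1) * a (m + 1) (h + 1))
    (m h : ℕ) :
    a (m + 1) (h + 1) = C ^ (m + 1) * (r / d) ^ m * d ^ h * gaussianProd y (m + 1) (h + 1) := by
  induction h generalizing m with
  | zero =>
    cases m with
    | zero => simp [base, gaussianProd_one_left]
    | succ m => simp [height_one, gaussianProd_eq_zero_of_lt y (by omega : 1 < m + 2)]
  | succ h ih =>
    cases m with
    | zero => simp [base, gaussianProd_one_left]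
    | succ m =>
      rw [step, ih, ih, gaussianProd_succ_succ y (m + 1) (h + 1) (hy _)]
      simp only [div_pow]
      field_simp
      ring

lemma pow_succ_mul_sub_pow_div (x : K) (q h : ℕ) (hx : x ≠ 0) (hxq : x ^ q ≠ 1) :
    (x ^ ((q + 1) * (h + 1)) - x ^ (h + 1)) / (x ^ (q + 1) - x)
      = x ^ h * (((x ^ q) ^ (h + 1) - 1) / (x ^ q - 1)) := by
  have hnum : x ^ ((q + 1) * (h + 1)) - x ^ (h + 1) = x * x ^ h * ((x ^ q) ^ (h + 1) - 1) := by
    ring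
  have hden : x ^ (q + 1) - x = x * (x ^ q - 1) := by ring
  have hxq' : x ^ q - 1 ≠ 0 := sub_ne_zero.2 hxq
  rw [hnum, hden]
  field_simp

end GaussianProd

theorem rary_caterpillar_count_complete_tree_general (d r : ℕ) (hd : 2 ≤ d) (hr2 : 2 ≤ r)
    (c : ℕ → ℕ → ℝ)
    (hbase : ∀ h : ℕ, 1 ≤ h →
      c r h = (d.choose r : ℝ) * (((d : ℝ) ^ (r * h) - (d : ℝ) ^ h) / ((d : ℝ) ^ r - d)))
    (hbase1 : ∀ k : ℕ, r < k → c k 1 = 0)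
    (hrec : ∀ k h : ℕ, r < k → 1 < h →
      c k h = (d : ℝ) * c k (h - 1)
        + (r : ℝ) * (d.choose r : ℝ) * (d : ℝ) ^ ((h - 1) * (r - 1)) * c (k - r + 1) (h - 1)) :
    ∀ k h : ℕ, 2 ≤ k → (r - 1) ∣ (k - 1) → 1 ≤ h →
      c k h = (d.choose r : ℝ) ^ ((k - 1) / (r - 1)) * ((r : ℝ) / (d : ℝ)) ^ ((k - r) / (r - 1))
        * (d : ℝ) ^ (h - 1) *
        ∏ i ∈ Finset.Icc 1 ((k - 1) / (r - 1)),
          ((d : ℝ) ^ (h * (r - 1)) - (d : ℝ) ^ ((i - 1) * (r - 1)))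
            / ((d : ℝ) ^ (i * (r - 1)) - 1) := by
  intro k h hk ⟨m, hm⟩ hh
  obtain ⟨q, rfl⟩ := Nat.exists_eq_add_one_of_ne_zero (by omega : r ≠ 0)
  obtain ⟨h, rfl⟩ := Nat.exists_eq_add_one_of_ne_zero (by omega : h ≠ 0)
  rw [Nat.add_sub_cancel] at hm ⊢
  obtain ⟨m, rfl⟩ := Nat.exists_eq_add_one_of_ne_zero (by rintro rfl; omega : m ≠ 0)
  obtain rfl : k = q * (m + 1) + 1 := by omega
  have hq : q ≠ 0 := by omega
  have hy : ∀ i, ((d : ℝ) ^ q) ^ (i + 1) ≠ 1 := fun i ↦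
    (one_lt_pow₀ (one_lt_pow₀ (by exact_mod_cast hd) hq) i.succ_ne_zero).ne'
  have hdeg_sub : q * (m + 1) + 1 - (q + 1) = q * m := by ring_nf; omega
  have hclosed := eq_mul_gaussianProd_of_recurrence (a := fun m h ↦ c (q * m + 1) h) (d := d)
    (r := ((q + 1 : ℕ) : ℝ)) (C := (d.choose (q + 1) : ℝ)) (by positivity) hy
    (fun g ↦ by
      rw [mul_one, hbase _ g.succ_pos,
        pow_succ_mul_sub_pow_div _ _ _ (by positivity) (by simpa using hy 0)]
      ring)
    (fun j ↦ hbase1 _ (by nlinarith))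
    (fun j g ↦ by
      rw [hrec _ _ (by nlinarith) (by omega),
        show q * (j + 2) + 1 - (q + 1) + 1 = q * (j + 1) + 1 by ring_nf; omega,
        Nat.add_sub_cancel, show g + 2 - 1 = g + 1 from rfl, mul_comm (g + 1) q, pow_mul])
    m h
  rw [hclosed, Nat.add_sub_cancel, Nat.add_sub_cancel, hdeg_sub,
    Nat.mul_div_cancel_left _ (Nat.pos_of_ne_zero hq),
    Nat.mul_div_cancel_left _ (Nat.pos_of_ne_zero hq), prod_Icc_pow_mul_eq_gaussianProd]

theorem rary_caterpillar_count_complete_tree (d r : ℕ) (hd : 2 ≤ d) (hr2 : 2 ≤ r)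
    (hrd : r ≤ d) (c : ℕ → ℕ → ℝ)
    (hbase : ∀ h : ℕ, 1 ≤ h →
      c r h = (d.choose r : ℝ) * (((d : ℝ) ^ (r * h) - (d : ℝ) ^ h) / ((d : ℝ) ^ r - d)))
    (hbase1 : ∀ k : ℕ, r < k → c k 1 = 0)
    (hrec : ∀ k h : ℕ, r < k → 1 < h →
      c k h = (d : ℝ) * c k (h - 1)
        + (r : ℝ) * (d.choose r : ℝ) * (d : ℝ) ^ ((h - 1) * (r - 1)) * c (k - r + 1) (h - 1)) :
    ∀ k h : ℕ, 2 ≤ k → (r - 1) ∣ (k - 1) → 1 ≤ h →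
      c k h = (d.choose r : ℝ) ^ ((k - 1) / (r - 1)) * ((r : ℝ) / (d : ℝ)) ^ ((k - r) / (r - 1))
        * (d : ℝ) ^ (h - 1) *
        ∏ i ∈ Finset.Icc 1 ((k - 1) / (r - 1)),
          ((d : ℝ) ^ (h * (r - 1)) - (d : ℝ) ^ ((i - 1) * (r - 1)))
            / ((d : ℝ) ^ (i * (r - 1)) - 1) :=
  rary_caterpillar_count_complete_tree_general d r hd hr2 c hbase hbase1 hrec
end

section
/- Fix integers d ≥ 2, 2 ≤ r ≤ d, and k ≥ 2 with (r-1) | (k-1). With c(F^r_k, CD^d_h) given by the explicit product formula C(d,r)^{(k-1)/(r-1)}·(r/d)^{(k-r)/(r-1)}·d^{h-1}·∏_{i=1}^{(k-1)/(r-1)} (d^{h(r-1)} - d^{(i-1)(r-1)})/(d^{i(r-1)} - 1), the limit as h → ∞ of c(F^r_k, CD^d_h)·k!·(d^h choose k)^{-1} — i.e. the density of F^r_k in CD^d_h — equals (k!/d)·C(d,r)^{(k-1)/(r-1)}·(r/d)^{(k-r)/(r-1)}·∏_{j=1}^{(k-1)/(r-1)} (d^{(r-1)j} - 1)^{-1}.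 -/
/-!
Both binomial coefficient and product are replaced by their asymptotic equivalents:
`(N choose k) ~ N^k / k!` as `N = d^h → ∞`, and `d^{h s} - d^{(i-1) s} ~ d^{h s}` for each fixed `i`.
Since `m s = k - 1`, the resulting model `d^{h-1} d^{h s m} / (d^{h k} / k!)` equals `k! / d` for
every `h ≥ 1`, and asymptotically equivalent functions share their limits.
-/

open Filter Topology Asymptotics Finset

lemma isEquivalent_pow_mul_sub_const {x : ℝ} (hx : 1 < x) {e : ℕ} (he : e ≠ 0) (c : ℝ) :
    (fun h : ℕ => x ^ (h * e) - c) ~[atTop] fun h => x ^ (h * e) := by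
  have htop : Tendsto (fun h : ℕ => x ^ (h * e)) atTop atTop := by
    simpa only [pow_mul'] using tendsto_pow_atTop_atTop_of_one_lt (one_lt_pow₀ hx he)
  simpa only [sub_eq_add_neg] using
    IsEquivalent.refl.add_const_of_norm_tendsto_atTop (c := -c) (tendsto_norm_atTop_atTop.comp htop)

lemma isEquivalent_choose_pow {d : ℕ} (hd : 1 < d) (k : ℕ) :
    (fun h : ℕ => ((d ^ h).choose k : ℝ)) ~[atTop] fun h => ((d : ℝ) ^ h) ^ k / k.factorial := by
  simpa only [Function.comp_def, Nat.cast_pow] using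
    (isEquivalent_choose k).comp_tendsto (tendsto_pow_atTop_atTop_of_one_lt hd)

lemma prod_pow_div_sub_one (x : ℝ) (h s m : ℕ) :
    ∏ i ∈ Icc 1 m, x ^ (h * s) / (x ^ (i * s) - 1) =
      x ^ (h * s * m) * ∏ i ∈ Icc 1 m, (x ^ (i * s) - 1)⁻¹ := by
  simp only [div_eq_mul_inv, prod_mul_distrib, prod_const, Nat.card_Icc, Nat.add_sub_cancel,
    pow_mul]

theorem tendsto_mul_prod_div_choose {d s m k : ℕ} (hd : 1 < d) (hs : s ≠ 0) (hk : m * s + 1 = k)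
    (c : ℝ) :
    Tendsto (fun h : ℕ => (c * (d : ℝ) ^ (h - 1) *
        ∏ i ∈ Icc 1 m, ((d : ℝ) ^ (h * s) - (d : ℝ) ^ ((i - 1) * s)) / ((d : ℝ) ^ (i * s) - 1))
          / ((d ^ h).choose k : ℝ))
      atTop (𝓝 (k.factorial / d * c * ∏ i ∈ Icc 1 m, ((d : ℝ) ^ (i * s) - 1)⁻¹)) := by
  have hx : (1 : ℝ) < d := by exact_mod_cast hd
  set P : ℝ := ∏ i ∈ Icc 1 m, ((d : ℝ) ^ (i * s) - 1)⁻¹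
  have hnum : (fun h : ℕ => c * (d : ℝ) ^ (h - 1) *
        ∏ i ∈ Icc 1 m, ((d : ℝ) ^ (h * s) - (d : ℝ) ^ ((i - 1) * s)) / ((d : ℝ) ^ (i * s) - 1))
      ~[atTop] fun h => c * (d : ℝ) ^ (h - 1) * ((d : ℝ) ^ (h * s * m) * P) := by
    simp only [P, ← prod_pow_div_sub_one]
    exact IsEquivalent.refl.mul <| IsEquivalent.finsetProd fun i _ =>
      (isEquivalent_pow_mul_sub_const hx hs _).div IsEquivalent.refl
  have hmodel : Tendsto (fun h : ℕ => c * (d : ℝ) ^ (h - 1) * ((d : ℝ) ^ (h * s * m) * P)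
      / (((d : ℝ) ^ h) ^ k / k.factorial)) atTop (𝓝 (k.factorial / d * c * P)) := by
    refine tendsto_const_nhds.congr' ?_
    filter_upwards [eventually_ge_atTop 1] with h hh
    have hexp : h * k = h - 1 + h * s * m + 1 := by
      obtain ⟨h, rfl⟩ := Nat.exists_eq_add_of_le' hh
      rw [← hk]
      ring_nf
      omega
    rw [← pow_mul, hexp]
    field_simp
    ring
  exact (hnum.div (isEquivalent_choose_pow hd k)).tendsto_nhds_iff.2 hmodel

theorem density_limit_rary_caterpillar_general (d r k : ℕ) (hd : 2 ≤ d) (hr2 : 2 ≤ r)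
    (hk : 2 ≤ k) (hdvd : (r - 1) ∣ (k - 1)) :
    Tendsto (fun h : ℕ =>
        ((d.choose r : ℝ) ^ ((k - 1) / (r - 1)) * ((r : ℝ) / (d : ℝ)) ^ ((k - r) / (r - 1))
            * (d : ℝ) ^ (h - 1) *
            ∏ i ∈ Finset.Icc 1 ((k - 1) / (r - 1)),
              ((d : ℝ) ^ (h * (r - 1)) - (d : ℝ) ^ ((i - 1) * (r - 1)))
                / ((d : ℝ) ^ (i * (r - 1)) - 1))
          / ((d ^ h).choose k : ℝ))
      atTop
      (nhds ((Nat.factorial k : ℝ) / (d : ℝ) * (d.choose r : ℝ) ^ ((k - 1) / (r - 1))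
        * ((r : ℝ) / (d : ℝ)) ^ ((k - r) / (r - 1))
        * ∏ j ∈ Finset.Icc 1 ((k - 1) / (r - 1)), ((d : ℝ) ^ ((r - 1) * j) - 1)⁻¹)) := by
  have hm : (k - 1) / (r - 1) * (r - 1) + 1 = k := by
    rw [Nat.div_mul_cancel hdvd]
    omega
  simpa only [mul_comm (r - 1), mul_assoc] using
    tendsto_mul_prod_div_choose (by omega) (by omega) hm
      ((d.choose r : ℝ) ^ ((k - 1) / (r - 1)) * ((r : ℝ) / (d : ℝ)) ^ ((k - r) / (r - 1)))

theorem density_limit_rary_caterpillar (d r k : ℕ) (hd : 2 ≤ d) (hr2 : 2 ≤ r)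
    (hrd : r ≤ d) (hk : 2 ≤ k) (hdvd : (r - 1) ∣ (k - 1)) :
    Tendsto (fun h : ℕ =>
        ((d.choose r : ℝ) ^ ((k - 1) / (r - 1)) * ((r : ℝ) / (d : ℝ)) ^ ((k - r) / (r - 1))
            * (d : ℝ) ^ (h - 1) *
            ∏ i ∈ Finset.Icc 1 ((k - 1) / (r - 1)),
              ((d : ℝ) ^ (h * (r - 1)) - (d : ℝ) ^ ((i - 1) * (r - 1)))
                / ((d : ℝ) ^ (i * (r - 1)) - 1))
          / ((d ^ h).choose k : ℝ))
      atTop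
      (nhds ((Nat.factorial k : ℝ) / (d : ℝ) * (d.choose r : ℝ) ^ ((k - 1) / (r - 1))
        * ((r : ℝ) / (d : ℝ)) ^ ((k - r) / (r - 1))
        * ∏ j ∈ Finset.Icc 1 ((k - 1) / (r - 1)), ((d : ℝ) ^ ((r - 1) * j) - 1)⁻¹)) :=
  density_limit_rary_caterpillar_general d r k hd hr2 hk hdvd
end

section
/- Fix integers d ≥ 2 and k ≥ 3, and set b_k = (1/2)·(d-1)^{k-1}·∏_{j=1}^{k-1}(d^j-1)^{-1}. Suppose a function c on strictly d-ary trees satisfies the recursion c(T) = ∑_{i=1}^d c(T_i) + ∑_{i≠j} |T_i|·c_{k-1}(T_j) where T_1,...,T_d are the branches of T, with analogous recursions down to the base count c_2(T) = C(|T|,2). Then c(T) ≥ b_k·n^k − n^{k-1}/(k-1)! for every strictly d-ary tree T with n leaves. -/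
/-!
Write `N = n₁ + ⋯ + n_d` for the leaf counts of the branches of `T`, `p_m = ∑ nᵢ ^ m` and
`M_m = ∑_{i ≠ j} nᵢ nⱼ ^ m = N p_m - p_{m+1}` (`crossPowerSum`). By induction on `m` and then on `T`,
`c_m(T) ≥ b_m N^m - e_m N^(m-1)` with `e_m = 1/(m-1)!` for `m ≥ 3`. Inserting the bounds for the
branches into the recursion leaves two inequalities between power sums of nonnegative reals:
`N^m ≤ p_m + (1 + d + ⋯ + d^(m-2)) M_{m-1}` for the leading terms, which follows inductively from
Chebyshev's inequality `N M_{m-1} ≤ d M_m` and explains `b_{m-1} = (1 + d + ⋯ + d^(m-2)) b_m`; and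
`p_m + m M_{m-1} ≤ N^m` for `m ≥ 3` for the error terms. At a leaf, `b_m ≤ e_m` follows from
Bernoulli's inequality `j (d - 1) ≤ d^j - 1`.
-/

/-- Strictly `d`-ary trees: every internal vertex has exactly `d` children. -/
inductive StrictDaryTree (d : ℕ) : Type
  | leaf : StrictDaryTree d
  | node : (Fin d → StrictDaryTree d) → StrictDaryTree d

/-- The number of leaves of a strictly `d`-ary tree. -/
def StrictDaryTree.leaves {d : ℕ} : StrictDaryTree d → ℕ
  | .leaf => 1
  | .node b => ∑ i, (b i).leaves

open Finset

section PowerSums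

variable {ι : Type*}

lemma three_mul_sum_mul_sum_sq_le {x : ι → ℝ} (s : Finset ι) (hx : ∀ i ∈ s, 0 ≤ x i) :
    3 * (∑ i ∈ s, x i) * ∑ i ∈ s, x i ^ 2 ≤ (∑ i ∈ s, x i) ^ 3 + 2 * ∑ i ∈ s, x i ^ 3 := by
  classical
  induction s using Finset.induction_on with
  | empty => simp
  | insert a s ha ih =>
    have hs : ∀ i ∈ s, 0 ≤ x i := fun i hi => hx i (mem_insert_of_mem hi)
    have hsq := sum_sq_le_sq_sum_of_nonneg hs
    rw [sum_insert ha, sum_insert ha, sum_insert ha]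
    nlinarith [ih hs, mul_nonneg (hx a (mem_insert_self a s)) (sub_nonneg.2 hsq)]

variable [Fintype ι] (x : ι → ℝ)

def crossPowerSum (k : ℕ) : ℝ := ∑ j, x j ^ k * (∑ i, x i - x j)

lemma crossPowerSum_eq (k : ℕ) :
    crossPowerSum x k = (∑ i, x i) * ∑ i, x i ^ k - ∑ i, x i ^ (k + 1) := by
  rw [crossPowerSum]
  simp only [mul_sub, sum_sub_distrib, ← sum_mul, ← pow_succ]
  ring

lemma sum_filter_ne_mul [DecidableEq ι] (f g : ι → ℝ) :
    ∑ p ∈ univ.filter (fun p : ι × ι => p.1 ≠ p.2), f p.1 * g p.2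
      = ∑ j, g j * (∑ i, f i - f j) := by
  rw [sum_filter, Fintype.sum_prod_type, sum_comm]
  refine sum_congr rfl fun j _ => ?_
  rw [sum_ite, sum_const_zero, add_zero, filter_ne', sum_erase_eq_sub (mem_univ j), mul_sub,
    mul_sum]
  simp [mul_comm]

variable {x}

lemma crossPowerSum_succ_le (hx : ∀ i, 0 ≤ x i) (k : ℕ) :
    crossPowerSum x (k + 1) ≤ (∑ i, x i) * crossPowerSum x k := by
  rw [crossPowerSum, crossPowerSum, mul_sum]
  refine sum_le_sum fun j _ => ?_
  rw [pow_succ]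
  nlinarith [mul_nonneg (pow_nonneg (hx j) k) (sq_nonneg (∑ i, x i - x j))]

lemma sum_mul_crossPowerSum_le (hx : ∀ i, 0 ≤ x i) (k : ℕ) :
    (∑ i, x i) * crossPowerSum x (k + 1) ≤ Fintype.card ι * crossPowerSum x (k + 2) := by
  set S := ∑ i, x i
  set w : ι → ℝ := fun j => x j ^ (k + 1) * (S - x j)
  have hw : Monovary w x := by
    intro i j hij
    have hpair : x i + x j ≤ S := add_le_sum (fun l _ => hx l) (mem_univ i) (mem_univ j)
      (by rintro rfl; exact hij.false)
    have hpow : x i ^ k ≤ x j ^ k := pow_le_pow_left₀ (hx i) hij.le k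
    have hprod : x i * (S - x i) ≤ x j * (S - x j) := by nlinarith
    calc w i = x i ^ k * (x i * (S - x i)) := by ring
      _ ≤ x j ^ k * (x j * (S - x j)) :=
        mul_le_mul hpow hprod (mul_nonneg (hx i) (by linarith [hx j])) (pow_nonneg (hx j) k)
      _ = w j := by ring
  have hsum : crossPowerSum x (k + 2) = ∑ j, w j * x j :=
    sum_congr rfl fun j _ => by ring
  rw [hsum, mul_comm]
  exact hw.sum_mul_sum_le_card_mul_sum

lemma sum_pow_le_sum_pow_add_geom_sum_mul_crossPowerSum (hx : ∀ i, 0 ≤ x i) (k : ℕ) :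
    (∑ i, x i) ^ (k + 2) ≤ ∑ i, x i ^ (k + 2)
      + (∑ u ∈ range (k + 1), (Fintype.card ι : ℝ) ^ u) * crossPowerSum x (k + 1) := by
  set S := ∑ i, x i
  have hS : 0 ≤ S := sum_nonneg fun i _ => hx i
  induction k with
  | zero => simp [crossPowerSum_eq, sq, S]
  | succ k ih =>
    have hG : 0 ≤ ∑ u ∈ range (k + 1), (Fintype.card ι : ℝ) ^ u := by positivity
    have hstep := sum_mul_crossPowerSum_le hx k
    have hsplit := crossPowerSum_eq x (k + 2)
    rw [geom_sum_succ, pow_succ']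
    nlinarith [mul_le_mul_of_nonneg_left ih hS, mul_le_mul_of_nonneg_left hstep hG]

lemma sum_pow_add_mul_crossPowerSum_le (hx : ∀ i, 0 ≤ x i) {q : ℕ} (hq : 2 ≤ q) :
    ∑ i, x i ^ (q + 1) + (q + 1) * crossPowerSum x q ≤ (∑ i, x i) ^ (q + 1) := by
  set S := ∑ i, x i
  induction q, hq using Nat.le_induction with
  | base =>
    have := three_mul_sum_mul_sum_sq_le univ fun i _ => hx i
    rw [crossPowerSum_eq]
    push_cast
    linarith
  | succ q hq ih =>
    have hS : 0 ≤ S := sum_nonneg fun i _ => hx i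
    have hsucc := crossPowerSum_succ_le hx q
    have hsplit := crossPowerSum_eq x (q + 1)
    rw [pow_succ']
    push_cast
    nlinarith [mul_le_mul_of_nonneg_left ih hS]

end PowerSums

section Coefficients

variable {d : ℕ}

noncomputable def caterpillarConst (d m : ℕ) : ℝ :=
  1 / 2 * ((d : ℝ) - 1) ^ (m - 1) * ∏ j ∈ Icc 1 (m - 1), ((d : ℝ) ^ j - 1)⁻¹

/-- `e_2 = 1/2` makes the bound exact for `c_2 = N(N-1)/2`; the generic `1/(m-1)!` would be too
weak there to start the error estimate at `m = 3`. -/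
noncomputable def caterpillarErrorCoeff (m : ℕ) : ℝ :=
  if m = 2 then 1 / 2 else ((m - 1).factorial : ℝ)⁻¹

lemma caterpillarErrorCoeff_two : caterpillarErrorCoeff 2 = 1 / 2 := if_pos rfl

lemma caterpillarErrorCoeff_add_three (t : ℕ) :
    caterpillarErrorCoeff (t + 3) = ((t + 2).factorial : ℝ)⁻¹ :=
  if_neg (by omega)

lemma caterpillarConst_nonneg (hd : 1 ≤ d) (m : ℕ) : 0 ≤ caterpillarConst d m := by
  have h1 : (1 : ℝ) ≤ d := by exact_mod_cast hd
  unfold caterpillarConst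
  refine mul_nonneg (by positivity) (prod_nonneg fun j _ => ?_)
  have := one_le_pow₀ (n := j) h1
  exact inv_nonneg.2 (by linarith)

lemma caterpillarConst_two (hd : 1 < d) : caterpillarConst d 2 = 1 / 2 := by
  have : (d : ℝ) - 1 ≠ 0 := sub_ne_zero.2 (by exact_mod_cast hd.ne')
  simp [caterpillarConst, this]

lemma caterpillarConst_mul_geom_sum (hd : 1 < d) (t : ℕ) :
    caterpillarConst d (t + 2) * ∑ u ∈ range (t + 1), (d : ℝ) ^ u = caterpillarConst d (t + 1) := by
  have hne : (d : ℝ) ^ (t + 1) - 1 ≠ 0 :=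
    sub_ne_zero.2 (one_lt_pow₀ (by exact_mod_cast hd) t.succ_ne_zero).ne'
  have hgeom := geom_sum_mul (d : ℝ) (t + 1)
  rw [caterpillarConst, caterpillarConst, show t + 2 - 1 = t + 1 by omega, Nat.add_sub_cancel,
    prod_Icc_succ_top (Nat.le_add_left 1 t)]
  calc _ = 1 / 2 * ((d : ℝ) - 1) ^ t * (∏ j ∈ Icc 1 t, ((d : ℝ) ^ j - 1)⁻¹)
        * (((∑ u ∈ range (t + 1), (d : ℝ) ^ u) * ((d : ℝ) - 1)) * ((d : ℝ) ^ (t + 1) - 1)⁻¹) := by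
        ring
    _ = _ := by rw [hgeom, mul_inv_cancel₀ hne, mul_one]

lemma sub_one_div_pow_sub_one_le (hd : 1 < d) {j : ℕ} (hj : 1 ≤ j) :
    ((d : ℝ) - 1) / ((d : ℝ) ^ j - 1) ≤ (j : ℝ)⁻¹ := by
  have h1 : (1 : ℝ) < d := by exact_mod_cast hd
  have hpos : 0 < (d : ℝ) ^ j - 1 := sub_pos.2 (one_lt_pow₀ h1 (by omega))
  have hbern := one_add_mul_le_pow (a := (d : ℝ) - 1) (by linarith) j
  rw [div_le_iff₀ hpos, inv_mul_eq_div, le_div_iff₀ (by positivity)]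
  rw [add_sub_cancel] at hbern
  linarith

lemma sub_one_pow_mul_prod_le (hd : 1 < d) (s : ℕ) :
    ((d : ℝ) - 1) ^ s * ∏ j ∈ Icc 1 s, ((d : ℝ) ^ j - 1)⁻¹ ≤ (s.factorial : ℝ)⁻¹ := by
  have h1 : (1 : ℝ) < d := by exact_mod_cast hd
  calc ((d : ℝ) - 1) ^ s * ∏ j ∈ Icc 1 s, ((d : ℝ) ^ j - 1)⁻¹
      = ∏ j ∈ Icc 1 s, ((d : ℝ) - 1) / ((d : ℝ) ^ j - 1) := by
        simp [div_eq_mul_inv, prod_mul_distrib]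
    _ ≤ ∏ j ∈ Icc 1 s, (j : ℝ)⁻¹ := by
        refine prod_le_prod (fun j hj => div_nonneg (by linarith) ?_)
          fun j hj => sub_one_div_pow_sub_one_le hd (mem_Icc.1 hj).1
        linarith [one_le_pow₀ (n := j) h1.le]
    _ = (s.factorial : ℝ)⁻¹ := by
        rw [prod_inv_distrib, ← Nat.cast_prod, ← Ico_add_one_right_eq_Icc, prod_Ico_id_eq_factorial]

lemma caterpillarConst_le_errorCoeff (hd : 1 < d) (t : ℕ) :
    caterpillarConst d (t + 3) ≤ caterpillarErrorCoeff (t + 3) := by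
  have := sub_one_pow_mul_prod_le hd (t + 2)
  have hpos : 0 ≤ ((t + 2).factorial : ℝ)⁻¹ := by positivity
  rw [caterpillarConst, caterpillarErrorCoeff_add_three, show t + 3 - 1 = t + 2 from rfl]
  linarith

end Coefficients

section Step

variable {d : ℕ}

lemma caterpillarConst_mul_sum_pow_le (hd : 1 < d) {x : Fin d → ℝ} (hx : ∀ i, 0 ≤ x i)
    (t : ℕ) :
    caterpillarConst d (t + 3) * (∑ i, x i) ^ (t + 3)
      ≤ caterpillarConst d (t + 3) * ∑ i, x i ^ (t + 3)
        + caterpillarConst d (t + 2) * crossPowerSum x (t + 2) := by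
  have h := sum_pow_le_sum_pow_add_geom_sum_mul_crossPowerSum hx (t + 1)
  rw [Fintype.card_fin] at h
  have := mul_le_mul_of_nonneg_left h (caterpillarConst_nonneg hd.le (t + 3))
  rw [← caterpillarConst_mul_geom_sum hd (t + 1)]
  linarith

lemma caterpillarErrorCoeff_mul_crossPowerSum_add_le {ι : Type*} [Fintype ι] {x : ι → ℝ}
    (hx : ∀ i, 0 ≤ x i) (t : ℕ) :
    caterpillarErrorCoeff (t + 2) * crossPowerSum x (t + 1)
      + caterpillarErrorCoeff (t + 3) * ∑ i, x i ^ (t + 2)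
      ≤ caterpillarErrorCoeff (t + 3) * (∑ i, x i) ^ (t + 2) := by
  cases t with
  | zero =>
    rw [caterpillarErrorCoeff_two, caterpillarErrorCoeff_add_three, crossPowerSum_eq]
    norm_num
    linarith
  | succ s =>
    have hC := sum_pow_add_mul_crossPowerSum_le hx (q := s + 2) (by omega)
    have hfac : ((s + 3).factorial : ℝ)⁻¹ * (s + 3) = ((s + 2).factorial : ℝ)⁻¹ := by
      rw [Nat.factorial_succ]
      push_cast
      field_simp
      ring
    have := mul_le_mul_of_nonneg_left hC (by positivity : (0 : ℝ) ≤ ((s + 3).factorial : ℝ)⁻¹)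
    rw [caterpillarErrorCoeff_add_three, caterpillarErrorCoeff_add_three, ← hfac]
    push_cast at this ⊢
    linarith

noncomputable def caterpillarBound (d m : ℕ) (N : ℝ) : ℝ :=
  caterpillarConst d m * N ^ m - caterpillarErrorCoeff m * N ^ (m - 1)

lemma caterpillarBound_succ (d m : ℕ) (N : ℝ) :
    caterpillarBound d (m + 1) N
      = caterpillarConst d (m + 1) * N ^ (m + 1) - caterpillarErrorCoeff (m + 1) * N ^ m :=
  rfl

lemma caterpillarBound_node (hd : 1 < d) (t : ℕ) {n a b : Fin d → ℝ} (hn : ∀ i, 0 ≤ n i)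
    (ha : ∀ i, caterpillarBound d (t + 3) (n i) ≤ a i)
    (hb : ∀ j, caterpillarBound d (t + 2) (n j) ≤ b j) :
    caterpillarBound d (t + 3) (∑ i, n i)
      ≤ ∑ i, a i + ∑ p ∈ univ.filter (fun p : Fin d × Fin d => p.1 ≠ p.2), n p.1 * b p.2 := by
  have hA : caterpillarConst d (t + 3) * ∑ i, n i ^ (t + 3)
      - caterpillarErrorCoeff (t + 3) * ∑ i, n i ^ (t + 2) ≤ ∑ i, a i := by
    simpa only [caterpillarBound_succ, mul_sum, ← sum_sub_distrib] using sum_le_sum fun i _ => ha i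
  have hB : caterpillarConst d (t + 2) * crossPowerSum n (t + 2)
      - caterpillarErrorCoeff (t + 2) * crossPowerSum n (t + 1)
      ≤ ∑ p ∈ univ.filter (fun p : Fin d × Fin d => p.1 ≠ p.2), n p.1 * b p.2 := by
    rw [sum_filter_ne_mul, crossPowerSum, crossPowerSum, mul_sum, mul_sum, ← sum_sub_distrib]
    refine sum_le_sum fun j _ => ?_
    have hrest : 0 ≤ ∑ i, n i - n j := sub_nonneg.2 (single_le_sum (fun i _ => hn i) (mem_univ j))
    have := mul_le_mul_of_nonneg_right (hb j) hrest
    rw [caterpillarBound_succ] at this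
    linarith
  have hlead := caterpillarConst_mul_sum_pow_le hd hn t
  have herr := caterpillarErrorCoeff_mul_crossPowerSum_add_le hn t
  rw [caterpillarBound_succ]
  linarith

end Step

theorem caterpillar_count_lower_bound (d k : ℕ) (hd : 2 ≤ d) (hk : 3 ≤ k)
    (c : ℕ → StrictDaryTree d → ℝ)
    (hbase2 : ∀ T : StrictDaryTree d, c 2 T = ((T.leaves).choose 2 : ℝ))
    (hleaf : ∀ m : ℕ, 3 ≤ m → c m .leaf = 0)
    (hrec : ∀ m : ℕ, 3 ≤ m → ∀ b : Fin d → StrictDaryTree d,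
      c m (.node b) = (∑ i, c m (b i))
        + ∑ p ∈ Finset.univ.filter (fun p : Fin d × Fin d => p.1 ≠ p.2),
            ((b p.1).leaves : ℝ) * c (m - 1) (b p.2)) :
    ∀ T : StrictDaryTree d,
      c k T ≥ ((1 / 2 : ℝ) * ((d : ℝ) - 1) ^ (k - 1) *
          ∏ j ∈ Finset.Icc 1 (k - 1), ((d : ℝ) ^ j - 1)⁻¹) * (T.leaves : ℝ) ^ k
        - (T.leaves : ℝ) ^ (k - 1) / (Nat.factorial (k - 1) : ℝ) := by
  have key : ∀ t (T : StrictDaryTree d), caterpillarBound d (t + 2) T.leaves ≤ c (t + 2) T := by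
    intro t
    induction t with
    | zero =>
      intro T
      rw [hbase2, Nat.cast_choose_two, caterpillarBound_succ, caterpillarConst_two hd,
        caterpillarErrorCoeff_two]
      exact le_of_eq (by ring)
    | succ t ih =>
      intro T
      induction T with
      | leaf =>
        rw [hleaf _ (by omega)]
        simpa [caterpillarBound, StrictDaryTree.leaves] using
          caterpillarConst_le_errorCoeff hd t
      | node b ihb =>
        rw [hrec _ (by omega), StrictDaryTree.leaves, Nat.cast_sum]
        exact caterpillarBound_node hd t (fun i => (b i).leaves.cast_nonneg) ihb fun j => ih (b j)
  intro T
  obtain ⟨t, rfl⟩ : ∃ t, k = t + 3 := ⟨k - 3, by omega⟩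
  have := key (t + 1) T
  rw [caterpillarBound, caterpillarErrorCoeff_add_three] at this
  rw [ge_iff_le, div_eq_inv_mul ((T.leaves : ℝ) ^ (t + 3 - 1))]
  exact this
end
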